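/- Every C ∈ SO₀(2,1) with c₁₁ > 1 can be written uniquely as C = k s with k = 1 ⊕ R for a 2×2 rotation R and s a symmetric matrix in SO₀(2,1); moreover the rotation factor k coincides with the rotation factor in the unique decomposition C = s' k'. -/

import Mathlib

open Matrix
noncomputable def Imat : Matrix (Fin 3) (Fin 3) ℝ := diagonal ![-1, 1, 1]
noncomputable def amat : Matrix (Fin 3) (Fin 3) ℝ := !![0,1,0; 1,0,0; 0,0,0]
noncomputable def bmat : Matrix (Fin 3) (Fin 3) ℝ := !![0,0,1; 0,0,0; 1,0,0]
noncomputable def cmat : Matrix (Fin 3) (Fin 3) ℝ := !![0,0,0; 0,0,-1; 0,1,0]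
noncomputable def rot2 (η : ℝ) : Matrix (Fin 2) (Fin 2) ℝ :=
  !![Real.cos η, -Real.sin η; Real.sin η, Real.cos η]
noncomputable def Kmat (η : ℝ) : Matrix (Fin 3) (Fin 3) ℝ :=
  !![1,0,0; 0,Real.cos η,-Real.sin η; 0,Real.sin η,Real.cos η]
def inSO21 (C : Matrix (Fin 3) (Fin 3) ℝ) : Prop :=
  C⁻¹ = Imat * Cᵀ * Imat ∧ C.det = 1 ∧ 1 ≤ C 0 0

/-!
If `C = k s` with `k = 1 ⊕ R`, then `s = k⁻¹ C` has the same first row `(c₁₁, c₁₂, c₁₃)` as `C`,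
and the rest of its first column is `R⁻¹ (c₂₁, c₃₁)`. So `s` can only be symmetric if `R⁻¹`
rotates `(c₂₁, c₃₁)` onto `(c₁₂, c₁₃)`; both vectors have length `√(c₁₁² - 1) > 0`, so exactly
one such rotation exists. Conversely, for a Lorentz matrix whose first row equals its first column
and with `c₁₁² ≠ 1`, comparing the orthogonality relations of the rows and of the columns against
the first one forces `s₂₃ = s₃₂`, so `s` is symmetric.
For the second claim, `s' k' = k' (k'⁻¹ s' k')` and `k'⁻¹ s' k'` is again symmetric, so `k'` is
the rotation factor of the first decomposition.
-/

lemma Imat_mul_Imat : Imat * Imat = 1 := by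
  simp only [Imat, diagonal_mul_diagonal, ← diagonal_one, diagonal_eq_diagonal_iff]
  intro i; fin_cases i <;> simp

lemma transpose_mul_Imat_mul_apply (C : Matrix (Fin 3) (Fin 3) ℝ) (i j : Fin 3) :
    (Cᵀ * Imat * C) i j = -(C 0 i * C 0 j) + C 1 i * C 1 j + C 2 i * C 2 j := by
  simp [Imat, mul_apply, Fin.sum_univ_three]

lemma mul_Imat_mul_transpose_apply (C : Matrix (Fin 3) (Fin 3) ℝ) (i j : Fin 3) :
    (C * Imat * Cᵀ) i j = -(C i 0 * C j 0) + C i 1 * C j 1 + C i 2 * C j 2 := by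
  simp [Imat, mul_apply, Fin.sum_univ_three]

section Kmat

lemma Kmat_mul_Kmat (a b : ℝ) : Kmat a * Kmat b = Kmat (a + b) := by
  ext i j
  fin_cases i <;> fin_cases j <;>
    simp [Kmat, mul_apply, Fin.sum_univ_three, Real.cos_add, Real.sin_add] <;> ring

lemma Kmat_zero : Kmat 0 = 1 := by
  ext i j; fin_cases i <;> fin_cases j <;> simp [Kmat, one_apply]

lemma Kmat_mul_Kmat_neg (a : ℝ) : Kmat a * Kmat (-a) = 1 := by
  rw [Kmat_mul_Kmat, add_neg_cancel, Kmat_zero]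

lemma Kmat_neg_mul_Kmat (a : ℝ) : Kmat (-a) * Kmat a = 1 := by
  rw [Kmat_mul_Kmat, neg_add_cancel, Kmat_zero]

lemma Kmat_transpose (a : ℝ) : (Kmat a)ᵀ = Kmat (-a) := by
  ext i j; fin_cases i <;> fin_cases j <;> simp [Kmat]

lemma Kmat_congr {a b : ℝ} (hc : Real.cos a = Real.cos b) (hs : Real.sin a = Real.sin b) :
    Kmat a = Kmat b := by
  rw [Kmat, Kmat, hc, hs]

lemma det_Kmat (a : ℝ) : (Kmat a).det = 1 := by
  simp [Kmat, det_fin_three, ← sq]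

lemma Kmat_mul_Imat_mul_transpose (a : ℝ) : Kmat a * Imat * (Kmat a)ᵀ = Imat := by
  have hcomm : Kmat a * Imat = Imat * Kmat a := by
    ext i j; fin_cases i <;> fin_cases j <;> simp [Kmat, Imat, mul_apply, Fin.sum_univ_three]
  rw [hcomm, mul_assoc, Kmat_transpose, Kmat_mul_Kmat_neg, mul_one]

variable (η : ℝ) (C : Matrix (Fin 3) (Fin 3) ℝ)

lemma Kmat_mul_apply_zero (j : Fin 3) : (Kmat η * C) 0 j = C 0 j := by
  simp [Kmat, mul_apply, Fin.sum_univ_three]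

lemma Kmat_neg_mul_apply_one_zero :
    (Kmat (-η) * C) 1 0 = Real.cos η * C 1 0 + Real.sin η * C 2 0 := by
  simp [Kmat, mul_apply, Fin.sum_univ_three]

lemma Kmat_neg_mul_apply_two_zero :
    (Kmat (-η) * C) 2 0 = -(Real.sin η * C 1 0) + Real.cos η * C 2 0 := by
  simp [Kmat, mul_apply, Fin.sum_univ_three]

end Kmat

section Lorentz

variable {C : Matrix (Fin 3) (Fin 3) ℝ}

lemma sq_add_sq_col_zero (hC : Cᵀ * Imat * C = Imat) :
    C 1 0 ^ 2 + C 2 0 ^ 2 = C 0 0 ^ 2 - 1 := by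
  have h := congrFun₂ hC 0 0
  rw [transpose_mul_Imat_mul_apply] at h
  simp only [Imat, diagonal_apply_eq, cons_val_zero] at h
  linear_combination h

lemma sq_add_sq_row_zero (hC : C * Imat * Cᵀ = Imat) :
    C 0 1 ^ 2 + C 0 2 ^ 2 = C 0 0 ^ 2 - 1 := by
  have h := congrFun₂ hC 0 0
  rw [mul_Imat_mul_transpose_apply] at h
  simp only [Imat, diagonal_apply_eq, cons_val_zero] at h
  linear_combination h

lemma sq_add_sq_col_zero_ne_zero (hC : Cᵀ * Imat * C = Imat) (h00 : C 0 0 ^ 2 ≠ 1) :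
    C 1 0 ^ 2 + C 2 0 ^ 2 ≠ 0 := by
  rw [sq_add_sq_col_zero hC]; exact sub_ne_zero.2 h00

lemma inSO21.mul_Imat_mul_transpose (hC : inSO21 C) : C * Imat * Cᵀ = Imat := by
  have h : C * (Imat * Cᵀ * Imat) = 1 := by
    rw [← hC.1]; exact mul_nonsing_inv C (by simp [hC.2.1])
  calc C * Imat * Cᵀ = C * (Imat * Cᵀ * Imat) * Imat := by
        simp only [mul_assoc, Imat_mul_Imat, mul_one]
    _ = Imat := by rw [h, one_mul]

lemma inSO21.transpose_mul_Imat_mul (hC : inSO21 C) : Cᵀ * Imat * C = Imat := by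
  have h : Imat * Cᵀ * Imat * C = 1 := by
    rw [← hC.1]; exact nonsing_inv_mul C (by simp [hC.2.1])
  calc Cᵀ * Imat * C = Imat * (Imat * Cᵀ * Imat * C) := by
        simp only [← mul_assoc, Imat_mul_Imat, one_mul]
    _ = Imat := by rw [h, mul_one]

lemma inSO21_of_mul_Imat_mul_transpose (h : C * Imat * Cᵀ = Imat) (hdet : C.det = 1)
    (h00 : 1 ≤ C 0 0) : inSO21 C := by
  refine ⟨inv_eq_right_inv ?_, hdet, h00⟩
  rw [← mul_assoc, ← mul_assoc, h, Imat_mul_Imat]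

lemma inSO21.Kmat_mul (hC : inSO21 C) (η : ℝ) : inSO21 (Kmat η * C) := by
  refine inSO21_of_mul_Imat_mul_transpose ?_ ?_ ?_
  · calc Kmat η * C * Imat * (Kmat η * C)ᵀ = Kmat η * (C * Imat * Cᵀ) * (Kmat η)ᵀ := by
          simp only [transpose_mul, mul_assoc]
      _ = Imat := by rw [hC.mul_Imat_mul_transpose, Kmat_mul_Imat_mul_transpose]
  · rw [det_mul, det_Kmat, hC.2.1, one_mul]
  · rw [Kmat_mul_apply_zero]; exact hC.2.2

end Lorentz

section PlaneRotation

lemma exists_cos_sin_eq {c s : ℝ} (h : c ^ 2 + s ^ 2 = 1) :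
    ∃ η : ℝ, Real.cos η = c ∧ Real.sin η = s := by
  obtain ⟨η, hη⟩ := (Complex.norm_eq_one_iff ⟨c, s⟩).1 (by
    rw [Complex.norm_def, Complex.normSq_mk, ← sq, ← sq, h, Real.sqrt_one])
  exact ⟨η, by simpa using congrArg Complex.re hη, by simpa using congrArg Complex.im hη⟩

variable {x y u v : ℝ}

lemma exists_rotation_eq (h : x ^ 2 + y ^ 2 = u ^ 2 + v ^ 2) (hxy : x ^ 2 + y ^ 2 ≠ 0) :
    ∃ η : ℝ, Real.cos η * x + Real.sin η * y = u ∧ -(Real.sin η * x) + Real.cos η * y = v := by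
  obtain ⟨η, hc, hs⟩ := exists_cos_sin_eq (c := (x * u + y * v) / (x ^ 2 + y ^ 2))
    (s := (y * u - x * v) / (x ^ 2 + y ^ 2)) (by
      field_simp
      linear_combination (x ^ 2 + y ^ 2) * h.symm)
  refine ⟨η, ?_, ?_⟩ <;> rw [hc, hs] <;> field_simp <;> ring

lemma cos_sin_unique_of_rotation_eq {R : Type*} [CommRing R] [IsDomain R] {x y c s c' s' : R}
    (hxy : x ^ 2 + y ^ 2 ≠ 0) (h₁ : c * x + s * y = c' * x + s' * y)
    (h₂ : -(s * x) + c * y = -(s' * x) + c' * y) : c = c' ∧ s = s' := by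
  constructor <;> refine sub_eq_zero.1 ((mul_eq_zero.1 ?_).resolve_right hxy)
  · linear_combination x * h₁ + y * h₂
  · linear_combination y * h₁ - x * h₂

end PlaneRotation

lemma transpose_eq_self_of_row_zero_eq_col_zero {S : Matrix (Fin 3) (Fin 3) ℝ}
    (hS : Sᵀ * Imat * S = Imat) (hS' : S * Imat * Sᵀ = Imat) (h00 : S 0 0 ^ 2 ≠ 1)
    (h₁ : S 0 1 = S 1 0) (h₂ : S 0 2 = S 2 0) : Sᵀ = S := by
  have c01 := congrFun₂ hS 0 1
  have c02 := congrFun₂ hS 0 2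
  have r01 := congrFun₂ hS' 0 1
  have r02 := congrFun₂ hS' 0 2
  rw [transpose_mul_Imat_mul_apply] at c01 c02
  rw [mul_Imat_mul_transpose_apply] at r01 r02
  simp only [Imat, diagonal_apply_ne, ne_eq, Fin.reduceEq, not_false_eq_true] at c01 c02 r01 r02
  have h₁₂ : S 1 2 = S 2 1 := by
    refine sub_eq_zero.1 ((mul_eq_zero.1 ?_).resolve_left (sq_add_sq_col_zero_ne_zero hS h00))
    simp only [h₁, h₂] at c01 c02 r01 r02
    linear_combination S 1 0 * (c02 - r02) + S 2 0 * (r01 - c01)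
  ext i j
  fin_cases i <;> fin_cases j <;> simp [h₁, h₂, h₁₂]

section Decomposition

variable {C : Matrix (Fin 3) (Fin 3) ℝ}

lemma rotation_eq_of_eq_Kmat_mul_symm {η : ℝ} {s : Matrix (Fin 3) (Fin 3) ℝ} (hs : sᵀ = s)
    (hCs : C = Kmat η * s) :
    Real.cos η * C 1 0 + Real.sin η * C 2 0 = C 0 1 ∧
      -(Real.sin η * C 1 0) + Real.cos η * C 2 0 = C 0 2 := by
  have hs_eq : s = Kmat (-η) * C := by rw [hCs, ← mul_assoc, Kmat_neg_mul_Kmat, one_mul]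
  rw [← Kmat_neg_mul_apply_one_zero, ← Kmat_neg_mul_apply_two_zero, ← hs_eq,
    ← Kmat_mul_apply_zero (-η) C, ← Kmat_mul_apply_zero (-η) C, ← hs_eq]
  exact ⟨congrFun₂ hs 0 1, congrFun₂ hs 0 2⟩

lemma Kmat_mul_symm_unique (hC : Cᵀ * Imat * C = Imat) (h00 : C 0 0 ^ 2 ≠ 1) {η η' : ℝ}
    {s s' : Matrix (Fin 3) (Fin 3) ℝ} (hs : sᵀ = s) (hCs : C = Kmat η * s) (hs' : s'ᵀ = s')
    (hCs' : C = Kmat η' * s') : Kmat η = Kmat η' ∧ s = s' := by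
  obtain ⟨e₁, e₂⟩ := rotation_eq_of_eq_Kmat_mul_symm hs hCs
  obtain ⟨e₁', e₂'⟩ := rotation_eq_of_eq_Kmat_mul_symm hs' hCs'
  obtain ⟨hc, hsin⟩ := cos_sin_unique_of_rotation_eq
    (sq_add_sq_col_zero_ne_zero hC h00) (e₁.trans e₁'.symm) (e₂.trans e₂'.symm)
  have hK : Kmat η = Kmat η' := Kmat_congr hc hsin
  refine ⟨hK, ?_⟩
  calc s = (Kmat η)ᵀ * C := by rw [hCs, Kmat_transpose, ← mul_assoc, Kmat_neg_mul_Kmat, one_mul]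
    _ = s' := by rw [hK, hCs', Kmat_transpose, ← mul_assoc, Kmat_neg_mul_Kmat, one_mul]

lemma exists_eq_Kmat_mul_symm (hC : inSO21 C) (h00 : C 0 0 ^ 2 ≠ 1) :
    ∃ (η : ℝ) (s : Matrix (Fin 3) (Fin 3) ℝ), sᵀ = s ∧ inSO21 s ∧ C = Kmat η * s := by
  obtain ⟨η, e₁, e₂⟩ := exists_rotation_eq (u := C 0 1) (v := C 0 2) (by
    rw [sq_add_sq_col_zero hC.transpose_mul_Imat_mul,
      sq_add_sq_row_zero hC.mul_Imat_mul_transpose])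
    (sq_add_sq_col_zero_ne_zero hC.transpose_mul_Imat_mul h00)
  have hS := hC.Kmat_mul (-η)
  refine ⟨η, Kmat (-η) * C, ?_, hS, by rw [← mul_assoc, Kmat_mul_Kmat_neg, one_mul]⟩
  refine transpose_eq_self_of_row_zero_eq_col_zero hS.transpose_mul_Imat_mul
    hS.mul_Imat_mul_transpose (by rwa [Kmat_mul_apply_zero]) ?_ ?_
  · rw [Kmat_mul_apply_zero, Kmat_neg_mul_apply_one_zero, e₁]
  · rw [Kmat_mul_apply_zero, Kmat_neg_mul_apply_two_zero, e₂]

end Decomposition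

theorem stmt9 (C : Matrix (Fin 3) (Fin 3) ℝ) (hC : inSO21 C) (h11 : 1 < C 0 0) :
    (∃! p : Matrix (Fin 3) (Fin 3) ℝ × Matrix (Fin 3) (Fin 3) ℝ,
      (∃ η : ℝ, p.1 = Kmat η) ∧ p.2ᵀ = p.2 ∧ inSO21 p.2 ∧ C = p.1 * p.2) ∧
    (∀ k s k' s' : Matrix (Fin 3) (Fin 3) ℝ,
      (∃ η : ℝ, k = Kmat η) → sᵀ = s → inSO21 s → C = k * s →
      (∃ η : ℝ, k' = Kmat η) → s'ᵀ = s' → inSO21 s' → C = s' * k' →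
      k = k') := by
  have h00 : C 0 0 ^ 2 ≠ 1 := (one_lt_pow₀ h11 two_ne_zero).ne'
  have hC' := hC.transpose_mul_Imat_mul
  obtain ⟨η, s, hs, hsSO, hCs⟩ := exists_eq_Kmat_mul_symm hC h00
  refine ⟨⟨(Kmat η, s), ⟨⟨η, rfl⟩, hs, hsSO, hCs⟩, ?_⟩, ?_⟩
  · rintro ⟨_, s'⟩ ⟨⟨η', rfl⟩, hs', -, hCs'⟩
    obtain ⟨hK, rfl⟩ := Kmat_mul_symm_unique hC' h00 hs' hCs' hs hCs
    rw [hK]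
  · rintro _ s₁ _ s' ⟨η₁, rfl⟩ hs₁ - hCs₁ ⟨η', rfl⟩ hs' - hCs'
    refine (Kmat_mul_symm_unique hC' h00 hs₁ hCs₁ (s' := Kmat (-η') * s' * Kmat η') ?_ ?_).1
    · rw [transpose_mul, transpose_mul, Kmat_transpose, Kmat_transpose, neg_neg, hs', mul_assoc]
    · rw [hCs', ← mul_assoc, ← mul_assoc, Kmat_mul_Kmat_neg, one_mul]
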